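/- The 4-dimensional complex algebra d₈₇ with basis e₁, e₂, e₃, e₄ and nonzero products e₁·e₃ = e₂, e₃·e₁ = -e₂ is associative and nilpotent, its kernel {x : xA = Ax = 0} is the 2-dimensional subspace spanned by e₂ and e₄, and its product satisfies A³ = 0. -/

import Mathlib

/-- The multiplication of the algebra `d₈₇` on `ℂ⁴` with basis `e₁,…,e₄`:
`e₁e₃ = e₂`, `e₃e₁ = -e₂`, all other basis products zero (0-indexed components). -/
def mul87 (x y : Fin 4 → ℂ) : Fin 4 → ℂ :=
  ![0, x 0 * y 2 - x 2 * y 0, 0, 0]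

/-! A product `mul87 x y` depends only on the `e₁`- and `e₃`-coordinates of its factors and
lands in the `e₂`-line, whose vectors have vanishing `e₁`- and `e₃`-coordinates; hence every
product of three elements is zero. The annihilator consists of the vectors with vanishing
`e₁`- and `e₃`-coordinates, which is the span of `e₂` and `e₄`. -/

lemma mul87_eq_zero_of_left {x : Fin 4 → ℂ} (h₀ : x 0 = 0) (h₂ : x 2 = 0) (y : Fin 4 → ℂ) :
    mul87 x y = 0 := by
  simp [mul87, h₀, h₂]

lemma mul87_eq_zero_of_right {y : Fin 4 → ℂ} (h₀ : y 0 = 0) (h₂ : y 2 = 0) (x : Fin 4 → ℂ) :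
    mul87 x y = 0 := by
  simp [mul87, h₀, h₂]

lemma mul87_mul87_left (x y z : Fin 4 → ℂ) : mul87 (mul87 x y) z = 0 :=
  mul87_eq_zero_of_left rfl rfl z

lemma mul87_mul87_right (x y z : Fin 4 → ℂ) : mul87 x (mul87 y z) = 0 :=
  mul87_eq_zero_of_right rfl rfl x

lemma foldl_mul87_eq_zero (x : Fin 4 → ℂ) {l : List (Fin 4 → ℂ)} (hl : 2 ≤ l.length) :
    l.foldl mul87 x = 0 := by
  obtain ⟨y, z, l, rfl⟩ : ∃ y z l', l = y :: z :: l' := by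
    match l, hl with
    | y :: z :: l', _ => exact ⟨y, z, l', rfl⟩
  induction l using List.reverseRecOn with
  | nil => exact mul87_mul87_left x y z
  | append_singleton l w ih =>
    rw [← List.cons_append, ← List.cons_append, List.foldl_append, ih (by simp)]
    exact mul87_eq_zero_of_left rfl rfl _

lemma forall_mul87_eq_zero_iff (x : Fin 4 → ℂ) :
    (∀ a, mul87 x a = 0 ∧ mul87 a x = 0) ↔ x 0 = 0 ∧ x 2 = 0 := by
  refine ⟨fun h ↦ ⟨?_, ?_⟩, fun ⟨h₀, h₂⟩ a ↦
    ⟨mul87_eq_zero_of_left h₀ h₂ a, mul87_eq_zero_of_right h₀ h₂ a⟩⟩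
  · simpa [mul87] using congrFun (h ![0, 0, 1, 0]).1 1
  · simpa [mul87] using congrFun (h ![1, 0, 0, 0]).1 1

lemma mem_span_e₂_e₄_iff (x : Fin 4 → ℂ) :
    x ∈ Submodule.span ℂ {(![0, 1, 0, 0] : Fin 4 → ℂ), ![0, 0, 0, 1]} ↔ x 0 = 0 ∧ x 2 = 0 := by
  rw [Submodule.mem_span_pair]
  constructor
  · rintro ⟨a, b, rfl⟩
    simp
  · rintro ⟨h₀, h₂⟩
    refine ⟨x 1, x 3, funext fun i ↦ ?_⟩
    fin_cases i <;> simp [h₀, h₂]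

lemma linearIndependent_e₂_e₄ :
    LinearIndependent ℂ ![(![0, 1, 0, 0] : Fin 4 → ℂ), ![0, 0, 0, 1]] := by
  rw [LinearIndependent.pair_iff]
  intro s t h
  simpa using And.intro (congrFun h 1) (congrFun h 3)

lemma finrank_span_e₂_e₄ :
    Module.finrank ℂ (Submodule.span ℂ {(![0, 1, 0, 0] : Fin 4 → ℂ), ![0, 0, 0, 1]}) = 2 := by
  have := finrank_span_eq_card linearIndependent_e₂_e₄
  rwa [Matrix.range_cons_cons_empty, Fintype.card_fin] at this

theorem d87_properties :
    (∀ x y z : Fin 4 → ℂ, mul87 (mul87 x y) z = mul87 x (mul87 y z)) ∧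
    (∃ n : ℕ, 1 ≤ n ∧ ∀ (x : Fin 4 → ℂ) (l : List (Fin 4 → ℂ)),
      l.length + 1 = n → l.foldl mul87 x = 0) ∧
    ({x : Fin 4 → ℂ | ∀ a : Fin 4 → ℂ, mul87 x a = 0 ∧ mul87 a x = 0} =
      (Submodule.span ℂ {(![0, 1, 0, 0] : Fin 4 → ℂ), ![0, 0, 0, 1]} : Set (Fin 4 → ℂ))) ∧
    Module.finrank ℂ
      (Submodule.span ℂ {(![0, 1, 0, 0] : Fin 4 → ℂ), ![0, 0, 0, 1]}) = 2 ∧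
    (∀ x y z : Fin 4 → ℂ, mul87 (mul87 x y) z = 0 ∧ mul87 x (mul87 y z) = 0) := by
  refine ⟨fun x y z ↦ by rw [mul87_mul87_left, mul87_mul87_right],
    ⟨3, by norm_num, fun x l hl ↦ foldl_mul87_eq_zero x (by omega)⟩, ?_, finrank_span_e₂_e₄,
    fun x y z ↦ ⟨mul87_mul87_left x y z, mul87_mul87_right x y z⟩⟩
  ext x
  exact (forall_mul87_eq_zero_iff x).trans (mem_span_e₂_e₄_iff x).symm
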